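/- arXiv:1509.06296 — 7 statements merged into one kernel-verified Lean document; each statement's English description precedes it below -/
import Mathlib

section
/- Let $H_{n+1} = [s_{i+j}]_{i,j=0}^{n+1}$ be an $(n+2)\times(n+2)$ partial Hankel matrix where only $s_{2n+1}$ is unspecified. Then every fully specified principal submatrix of $H_{n+1}$ is positive definite if and only if $H_n = [s_{i+j}]_{i,j=0}^n$ is positive definite and $s_{2n+2} - w_n^T H_{n-1}^{-1} w_n > 0$, where $w_n^T = (s_{n+1}, s_{n+2}, \ldots, s_{2n})$ and $H_{n-1} = [s_{i+j}]_{i,j=0}^{n-1}$. -/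
/-!
A principal submatrix that avoids the unspecified entry, i.e. does not contain both indices `n`
and `n + 1`, lies inside one of the two maximal ones, and principal submatrices of a positive
definite matrix are positive definite. So the condition says exactly that `H_n` and `H_{n+1}`
with row and column `n` deleted are positive definite. The latter is, after reordering, the block
matrix `[H_{n-1}, w; wᵀ, s_{2n+2}]`; since `H_{n-1}` is a principal submatrix of `H_n`, it is
positive definite, and then the block matrix is positive definite iff its Schur complement
`s_{2n+2} - wᵀ H_{n-1}⁻¹ w` is positive.
-/

open Matrix

/-- Hankel matrix of a sequence. -/
def hankelMatrix (s : ℕ → ℝ) (n : ℕ) : Matrix (Fin (n + 1)) (Fin (n + 1)) ℝ :=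
  Matrix.of fun i j => s ((i : ℕ) + (j : ℕ))

namespace Matrix

section PosDef

variable {R : Type*} [Ring R] [PartialOrder R] [StarRing R] {m n : Type*}

theorem posDef_submatrix_equiv {M : Matrix n n R} (e : m ≃ n) :
    (M.submatrix e e).PosDef ↔ M.PosDef :=
  ⟨fun h => by simpa using h.submatrix e.symm.injective, fun h => h.submatrix e.injective⟩

theorem PosDef.submatrix_subtype_of_subset {M : Matrix n n R} {s t : Finset n} (hst : s ⊆ t)
    (ht : (M.submatrix ((↑) : t → n) (↑)).PosDef) :
    (M.submatrix ((↑) : s → n) (↑)).PosDef :=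
  ht.submatrix (e := fun i : s => (⟨i, hst i.2⟩ : t)) fun _ _ h =>
    Subtype.ext (by simpa using congrArg Subtype.val h)

theorem forall_posDef_submatrix_avoiding_pair_iff [Fintype n] [DecidableEq n]
    (M : Matrix n n R) (a b : n) :
    (∀ α : Finset n, ¬(a ∈ α ∧ b ∈ α) → (M.submatrix ((↑) : α → n) (↑)).PosDef) ↔
      (M.submatrix ((↑) : Finset.univ.erase b → n) (↑)).PosDef ∧
        (M.submatrix ((↑) : Finset.univ.erase a → n) (↑)).PosDef := by
  refine ⟨fun h => ⟨h _ (by simp), h _ (by simp)⟩, fun ⟨hb, ha⟩ α hα => ?_⟩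
  by_cases hbα : b ∈ α
  · refine ha.submatrix_subtype_of_subset fun i hi => Finset.mem_erase.2 ⟨?_, Finset.mem_univ i⟩
    rintro rfl
    exact hα ⟨hi, hbα⟩
  · refine hb.submatrix_subtype_of_subset fun i hi => Finset.mem_erase.2 ⟨?_, Finset.mem_univ i⟩
    rintro rfl
    exact hbα hi

theorem posDef_submatrix_erase_iff {k : ℕ} (M : Matrix (Fin (k + 1)) (Fin (k + 1)) R)
    (p : Fin (k + 1)) :
    (M.submatrix ((↑) : Finset.univ.erase p → Fin (k + 1)) (↑)).PosDef ↔
      (M.submatrix p.succAbove p.succAbove).PosDef :=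
  (posDef_submatrix_equiv ((finSuccAboveEquiv p).trans
    (Equiv.subtypeEquivRight fun i => by simp))).symm

theorem posDef_iff_of_unique [StarOrderedRing R] [NoZeroDivisors R] [Nontrivial R] [Unique n]
    (M : Matrix n n R) : M.PosDef ↔ 0 < M default default := by
  have hM : M = diagonal fun _ => M default default := by
    ext i j
    simp [Subsingleton.elim i default, Subsingleton.elim j default]
  rw [hM, posDef_diagonal_iff]
  simp

end PosDef

open scoped ComplexOrder in
theorem PosDef.fromBlocks₁₁_posDef_iff {𝕜 : Type*} [RCLike 𝕜] {m n : Type*} [Fintype m]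
    [Fintype n] [DecidableEq m] [DecidableEq n] {A : Matrix m m 𝕜} (B : Matrix m n 𝕜)
    (D : Matrix n n 𝕜) (hA : A.PosDef) [Invertible A] :
    (fromBlocks A B Bᴴ D).PosDef ↔ (D - Bᴴ * A⁻¹ * B).PosDef := by
  have hunit : IsUnit (fromBlocks A B Bᴴ D) ↔ IsUnit (D - Bᴴ * A⁻¹ * B) := by
    rw [isUnit_fromBlocks_iff_of_invertible₁₁, invOf_eq_nonsing_inv]
  refine ⟨fun h => ?_, fun h => ?_⟩
  · exact ((hA.fromBlocks₁₁ B D).1 h.posSemidef).posDef_iff_isUnit.2 (hunit.1 h.isUnit)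
  · exact ((hA.fromBlocks₁₁ B D).2 h.posSemidef).posDef_iff_isUnit.2 (hunit.2 h.isUnit)

theorem conjTranspose_replicateCol_mul_mul_replicateCol {R : Type*} [CommRing R] [StarRing R]
    {m ι : Type*} [Fintype m] (A : Matrix m m R) (v : m → R) :
    (replicateCol ι v)ᴴ * A * replicateCol ι v = of fun _ _ => star v ⬝ᵥ A *ᵥ v := by
  rw [conjTranspose_replicateCol, Matrix.mul_assoc, ← replicateCol_mulVec,
    replicateRow_mul_replicateCol]

end Matrix

theorem hankel_submatrix_succAbove_eq_fromBlocks (s : ℕ → ℝ) (n : ℕ) :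
    ((of fun i j : Fin (n + 2) => s (i + j)).submatrix (Fin.last n).castSucc.succAbove
      (Fin.last n).castSucc.succAbove).submatrix finSumFinEquiv finSumFinEquiv =
      fromBlocks (of fun i j : Fin n => s (i + j)) (replicateCol (Fin 1) fun i => s (n + 1 + i))
        (replicateCol (Fin 1) fun i => s (n + 1 + i))ᴴ (of fun _ _ => s (2 * n + 2)) := by
  ext (i | i) (j | j) <;> simp [Fin.succAbove, Fin.lt_def] <;> congr 1 <;> omega

/-- Every fully specified principal submatrix of the partial Hankel matrix
`H_{n+1}` (with only `s (2n+1)` unspecified) is positive definite iff `H_n` is positive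
definite and the Schur-complement quantity `s (2n+2) - wᵀ H_{n-1}⁻¹ w` is positive. -/
theorem stmt_5 (n : ℕ) (s : ℕ → ℝ)
    (w : Fin n → ℝ) (hw : ∀ i, w i = s (n + 1 + (i : ℕ))) :
    (∀ α : Finset (Fin (n + 2)),
        ¬((⟨n, by omega⟩ : Fin (n + 2)) ∈ α ∧ (⟨n + 1, by omega⟩ : Fin (n + 2)) ∈ α) →
        (((Matrix.of fun i j : Fin (n + 2) => s ((i : ℕ) + (j : ℕ)))).submatrix
          (fun i : α => (i : Fin (n + 2))) (fun i : α => (i : Fin (n + 2)))).PosDef)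
      ↔
    ((hankelMatrix s n).PosDef ∧
      0 < s (2 * n + 2) - w ⬝ᵥ (Matrix.of fun i j : Fin n => s ((i : ℕ) + (j : ℕ)))⁻¹ *ᵥ w) := by
  obtain rfl : w = fun i : Fin n => s (n + 1 + i) := funext hw
  refine (forall_posDef_submatrix_avoiding_pair_iff _ (Fin.last n).castSucc
    (Fin.last (n + 1))).trans ?_
  rw [posDef_submatrix_erase_iff, posDef_submatrix_erase_iff, Fin.succAbove_last]
  refine and_congr_right fun hH => ?_
  rw [← posDef_submatrix_equiv finSumFinEquiv, hankel_submatrix_succAbove_eq_fromBlocks]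
  have hA : (of fun i j : Fin n => s (i + j)).PosDef := hH.submatrix (Fin.castSucc_injective n)
  have := hA.isUnit.invertible
  rw [hA.fromBlocks₁₁_posDef_iff, posDef_iff_of_unique,
    conjTranspose_replicateCol_mul_mul_replicateCol]
  simp
end

section
/- Let $s_0, \ldots, s_{2n}$ be reals such that $H_n = [s_{i+j}]_{i,j=0}^n$ is positive definite. Then there exist reals $s_{2n+1}$ and $s_{2n+2}$ such that $H_{n+1} = [s_{i+j}]_{i,j=0}^{n+1}$ is positive definite. -/
/-!
Bordering `H_n` by the column `v = (s_{n+1}, …, s_{2n+1})` and the corner `s_{2n+2}` gives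
`H_{n+1}`, which is positive definite as soon as the Schur complement `s_{2n+2} - vᵀ H_n⁻¹ v` is
positive. So `s_{2n+1}` may be kept arbitrary and `s_{2n+2} = vᵀ H_n⁻¹ v + 1` works.
-/

open Matrix
open scoped ComplexOrder

theorem Matrix.posDef_fromBlocks₁₁ {𝕜 m n : Type*} [RCLike 𝕜] [Fintype m] [Fintype n]
    [DecidableEq m] [DecidableEq n] {A : Matrix m m 𝕜} (B : Matrix m n 𝕜) (D : Matrix n n 𝕜)
    (hA : A.PosDef) (hS : (D - Bᴴ * A⁻¹ * B).PosDef) : (fromBlocks A B Bᴴ D).PosDef := by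
  have := hA.isUnit.invertible
  rw [((PosDef.fromBlocks₁₁ B D hA).mpr hS.posSemidef).posDef_iff_det_ne_zero,
    det_fromBlocks₁₁, invOf_eq_nonsing_inv]
  exact mul_ne_zero hA.det_pos.ne' hS.det_pos.ne'

theorem hankelMatrix_succ (s : ℕ → ℝ) (n : ℕ) :
    hankelMatrix s (n + 1) = reindex finSumFinEquiv finSumFinEquiv
      (fromBlocks (hankelMatrix s n) (replicateCol (Fin 1) fun i => s (i + (n + 1)))
        (replicateCol (Fin 1) fun i => s (i + (n + 1)))ᴴ (of fun _ _ => s (2 * n + 2))) := by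
  ext i j
  refine Fin.lastCases ?_ (fun i => ?_) i <;> refine Fin.lastCases ?_ (fun j => ?_) j <;>
    simp only [hankelMatrix, reindex_apply, submatrix_apply, of_apply, Fin.val_last,
      Fin.val_castSucc, finSumFinEquiv_symm_last, finSumFinEquiv_symm_apply_castSucc,
      fromBlocks_apply₁₁, fromBlocks_apply₁₂, fromBlocks_apply₂₁, fromBlocks_apply₂₂,
      conjTranspose_eq_transpose_of_trivial, transpose_replicateCol, replicateCol_apply,
      replicateRow_apply] <;> congr 1 <;> omega

theorem exists_posDef_hankelMatrix_update {n : ℕ} {s : ℕ → ℝ} (hpd : (hankelMatrix s n).PosDef) :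
    ∃ b, (hankelMatrix (Function.update s (2 * n + 2) b) (n + 1)).PosDef := by
  set v : Matrix (Fin (n + 1)) (Fin 1) ℝ := replicateCol (Fin 1) fun i => s (i + (n + 1))
  set b := (vᴴ * (hankelMatrix s n)⁻¹ * v) 0 0 + 1
  have hschur : (of (fun _ _ => b) - vᴴ * (hankelMatrix s n)⁻¹ * v).PosDef := by
    convert PosDef.one (n := Fin 1) (R := ℝ)
    ext i j
    fin_cases i; fin_cases j
    simp [b]
  refine ⟨b, ?_⟩
  have hlow : hankelMatrix (Function.update s (2 * n + 2) b) n = hankelMatrix s n := by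
    ext i j
    simp only [hankelMatrix, of_apply, Function.update_apply]
    exact if_neg (by omega)
  have hcol : (replicateCol (Fin 1) fun i : Fin (n + 1) =>
      Function.update s (2 * n + 2) b (i + (n + 1))) = v := by
    ext i j
    simp only [v, replicateCol_apply, Function.update_apply]
    exact if_neg (by omega)
  rw [hankelMatrix_succ, hlow, hcol, Function.update_self]
  exact (posDef_fromBlocks₁₁ v _ hpd hschur).submatrix finSumFinEquiv.symm.injective

theorem stmt_7 (n : ℕ) (s : ℕ → ℝ) (hpd : (hankelMatrix s n).PosDef) :
    ∃ a b : ℝ, (Matrix.of fun i j : Fin (n + 2) =>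
      if (i : ℕ) + (j : ℕ) = 2 * n + 1 then a
      else if (i : ℕ) + (j : ℕ) = 2 * n + 2 then b
      else s ((i : ℕ) + (j : ℕ))).PosDef := by
  obtain ⟨b, hb⟩ := exists_posDef_hankelMatrix_update hpd
  refine ⟨s (2 * n + 1), b, ?_⟩
  convert hb using 1
  ext i j
  simp only [hankelMatrix, of_apply, Function.update_apply]
  split_ifs <;> simp_all
end

section
/- Every finite positive definite Hankel matrix extends to a positive definite sequence: if $s_0, \ldots, s_{2n}$ are reals with $H_n = [s_{i+j}]_{i,j=0}^n$ positive definite, then there exists an infinite sequence $\{\tilde{s}_k\}_{k\geq 0}$ with $\tilde{s}_k = s_k$ for $0 \leq k \leq 2n$ such that $[\tilde{s}_{i+j}]_{i,j=0}^m$ is positive definite for every $m \geq 0$. -/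
open Matrix

namespace Matrix.PosDef

variable {𝕜 m n : Type*} [RCLike 𝕜] [Fintype m] [Fintype n] [DecidableEq m] [DecidableEq n]

open scoped ComplexOrder in
theorem posDef_fromBlocks₁₁ {A : Matrix m m 𝕜} (B : Matrix m n 𝕜) (D : Matrix n n 𝕜)
    (hA : A.PosDef) [Invertible A] (hS : (D - Bᴴ * A⁻¹ * B).PosDef) :
    (fromBlocks A B Bᴴ D).PosDef := by
  refine ((hA.fromBlocks₁₁ B D).2 hS.posSemidef).posDef_iff_isUnit.2 ?_
  rw [isUnit_fromBlocks_iff_of_invertible₁₁, invOf_eq_nonsing_inv]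
  exact hS.isUnit

end Matrix.PosDef

theorem hankelMatrix_congr {s t : ℕ → ℝ} {m : ℕ} (h : ∀ k ≤ 2 * m, s k = t k) :
    hankelMatrix s m = hankelMatrix t m :=
  Matrix.ext fun i j => h _ (by omega)

theorem Matrix.PosDef.hankelMatrix_of_le {s : ℕ → ℝ} {m m' : ℕ}
    (hs : (hankelMatrix s m').PosDef) (h : m ≤ m') : (hankelMatrix s m).PosDef :=
  hs.submatrix (Fin.castLE_injective (Nat.succ_le_succ h))

def hankelBorder (s : ℕ → ℝ) (m : ℕ) : Matrix (Fin (m + 1)) (Fin 1) ℝ :=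
  Matrix.of fun i _ => s (i + (m + 1))

theorem hankelMatrix_succ_s8 (s : ℕ → ℝ) (m : ℕ) :
    hankelMatrix s (m + 1) =
      (fromBlocks (hankelMatrix s m) (hankelBorder s m) (hankelBorder s m)ᴴ
        (Matrix.of fun _ _ => s (2 * m + 2))).submatrix finSumFinEquiv.symm
        finSumFinEquiv.symm := by
  ext i j
  induction i using Fin.lastCases <;> induction j using Fin.lastCases <;>
    simp [hankelMatrix, hankelBorder] <;> ring_nf

/-- `s_{2m+2} - hankelThreshold s m` is the Schur complement of `H_m` in `H_{m+1}`. -/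
noncomputable def hankelThreshold (s : ℕ → ℝ) (m : ℕ) : ℝ :=
  ((hankelBorder s m)ᴴ * (hankelMatrix s m)⁻¹ * hankelBorder s m) 0 0

theorem posDef_hankelMatrix_succ {s : ℕ → ℝ} {m : ℕ} (hs : (hankelMatrix s m).PosDef)
    (h : hankelThreshold s m < s (2 * m + 2)) : (hankelMatrix s (m + 1)).PosDef := by
  have : Invertible (hankelMatrix s m) := hs.isUnit.invertible
  have hschur : Matrix.of (fun _ _ => s (2 * m + 2)) -
        (hankelBorder s m)ᴴ * (hankelMatrix s m)⁻¹ * hankelBorder s m =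
      diagonal fun _ : Fin 1 => s (2 * m + 2) - hankelThreshold s m := by
    ext i j
    fin_cases i; fin_cases j
    rfl
  rw [hankelMatrix_succ_s8]
  refine (hs.posDef_fromBlocks₁₁ _ _ ?_).submatrix finSumFinEquiv.symm.injective
  rw [hschur]
  exact PosDef.diagonal fun _ => sub_pos.2 h

theorem hankelThreshold_congr {s t : ℕ → ℝ} {m : ℕ} (h : ∀ k ≤ 2 * m + 1, s k = t k) :
    hankelThreshold s m = hankelThreshold t m := by
  have hB : hankelBorder s m = hankelBorder t m := Matrix.ext fun i _ => h _ (by omega)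
  rw [hankelThreshold, hankelThreshold, hB, hankelMatrix_congr fun k hk => h k (by omega)]

noncomputable def hankelExtension (s : ℕ → ℝ) (n : ℕ) : ℕ → ℕ → ℝ
  | 0 => s
  | j + 1 => Function.update (hankelExtension s n j) (2 * (n + j) + 2)
      (hankelThreshold (hankelExtension s n j) (n + j) + 1)

theorem hankelExtension_succ_apply_of_le {s : ℕ → ℝ} {n j k : ℕ}
    (hk : k ≤ 2 * (n + j) + 1) : hankelExtension s n (j + 1) k = hankelExtension s n j k :=
  Function.update_of_ne (by omega) _ _

theorem hankelExtension_apply_of_le {s : ℕ → ℝ} {n j j' k : ℕ} (hj : j ≤ j')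
    (hk : k ≤ 2 * (n + j) + 1) : hankelExtension s n j' k = hankelExtension s n j k := by
  induction j', hj using Nat.le_induction with
  | base => rfl
  | succ j' hj ih => rw [hankelExtension_succ_apply_of_le (by omega), ih]

theorem posDef_hankelMatrix_hankelExtension {s : ℕ → ℝ} {n : ℕ}
    (hs : (hankelMatrix s n).PosDef) (j : ℕ) :
    (hankelMatrix (hankelExtension s n j) (n + j)).PosDef := by
  induction j with
  | zero => exact hs
  | succ j ih =>
    have hagree : ∀ k ≤ 2 * (n + j) + 1,
        hankelExtension s n (j + 1) k = hankelExtension s n j k :=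
      fun k hk => hankelExtension_succ_apply_of_le hk
    refine posDef_hankelMatrix_succ (m := n + j) ?_ ?_
    · rwa [hankelMatrix_congr fun k hk => hagree k (by omega)]
    · rw [hankelThreshold_congr hagree, hankelExtension, Function.update_self]
      exact lt_add_one _

theorem stmt_8 (n : ℕ) (s : ℕ → ℝ) (hpd : (hankelMatrix s n).PosDef) :
    ∃ t : ℕ → ℝ, (∀ k ≤ 2 * n, t k = s k) ∧ ∀ m, (hankelMatrix t m).PosDef := by
  set t : ℕ → ℝ := fun k => hankelExtension s n k k
  have ht : ∀ j, ∀ k ≤ 2 * (n + j), t k = hankelExtension s n j k := fun j k hk => by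
    rcases le_total j k with h | h
    · exact hankelExtension_apply_of_le h (by omega)
    · exact (hankelExtension_apply_of_le h (by omega)).symm
  refine ⟨t, fun k hk => ht 0 k (by omega), fun m => ?_⟩
  have hpos : (hankelMatrix t (n + m)).PosDef :=
    hankelMatrix_congr (ht m) ▸ posDef_hankelMatrix_hankelExtension hpd m
  exact hpos.hankelMatrix_of_le (by omega)
end

section
/- Let $a > 0$ and $r \in \mathbb{R}$, $n \geq 1$. If $\{s_k\}_{k \geq 0}$ is a real sequence with $s_k = a r^k$ for all $0 \leq k \leq 2n$ and every Hankel matrix $[s_{i+j}]_{i,j=0}^m$ is positive semidefinite, then $s_k = a r^k$ for all $k \geq 0$. -/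
/-!
Since `s (2n-2), s (2n-1), s (2n)` are geometric with ratio `r`, the vector `r e_{n-1} - e_n` has
zero quadratic form against every Hankel matrix of `s`. A positive semidefinite matrix annihilates
every vector of zero quadratic form, so each row of `H (r e_{n-1} - e_n) = 0` gives the recurrence
`s (k+1) = r s k` for `k ≥ n - 1`, which propagates the geometric values past `2n`.
-/

open Matrix

lemma hankelMatrix_mulVec_smul_single_sub_single (s : ℕ → ℝ) (M : ℕ) (r : ℝ)
    (i i' : Fin (M + 1)) :
    hankelMatrix s M *ᵥ (r • Pi.single i 1 - Pi.single i' 1) =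
      fun p : Fin (M + 1) => r * s (i + p) - s (i' + p) := by
  ext p
  simp [mulVec_sub, mulVec_smul, mulVec_single, hankelMatrix, add_comm]

theorem hankel_succ_eq_mul_of_posSemidef {s : ℕ → ℝ} (hs : ∀ m, (hankelMatrix s m).PosSemidef)
    {r : ℝ} {i : ℕ} (h : r ^ 2 * s (2 * i) - 2 * r * s (2 * i + 1) + s (2 * i + 2) = 0)
    (j : ℕ) : s (i + j + 1) = r * s (i + j) := by
  let v : Fin (i + j + 2) → ℝ := r • Pi.single ⟨i, by omega⟩ 1 - Pi.single ⟨i + 1, by omega⟩ 1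
  have hform : star v ⬝ᵥ hankelMatrix s (i + j + 1) *ᵥ v = 0 := by
    rw [hankelMatrix_mulVec_smul_single_sub_single, star_trivial]
    simp only [v, sub_dotProduct, smul_dotProduct, single_dotProduct, smul_eq_mul, one_mul]
    rw [← h]
    ring_nf
  have hker := congrFun (((hs _).dotProduct_mulVec_zero_iff v).mp hform) ⟨j, by omega⟩
  rw [hankelMatrix_mulVec_smul_single_sub_single] at hker
  dsimp only at hker
  rw [Nat.add_right_comm, Pi.zero_apply, sub_eq_zero] at hker
  exact hker.symm

theorem stmt_10_general (a r : ℝ) (n : ℕ) (hn : 1 ≤ n) (s : ℕ → ℝ)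
    (hinit : ∀ k ≤ 2 * n, s k = a * r ^ k)
    (hs : ∀ m, (hankelMatrix s m).PosSemidef) :
    ∀ k, s k = a * r ^ k := by
  obtain ⟨i, rfl⟩ : ∃ i, n = i + 1 := ⟨n - 1, by omega⟩
  have hsecond : r ^ 2 * s (2 * i) - 2 * r * s (2 * i + 1) + s (2 * i + 2) = 0 := by
    rw [hinit _ (by omega), hinit _ (by omega), hinit _ (by omega)]
    ring
  intro k
  induction k with
  | zero => exact hinit 0 (by omega)
  | succ k ih =>
    by_cases hk : k + 1 ≤ 2 * (i + 1)
    · exact hinit _ hk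
    obtain ⟨j, rfl⟩ : ∃ j, k = i + j := ⟨k - i, by omega⟩
    rw [hankel_succ_eq_mul_of_posSemidef hs hsecond j, ih]
    ring

theorem stmt_10 (a r : ℝ) (ha : 0 < a) (n : ℕ) (hn : 1 ≤ n) (s : ℕ → ℝ)
    (hinit : ∀ k ≤ 2 * n, s k = a * r ^ k)
    (hs : ∀ m, (hankelMatrix s m).PosSemidef) :
    ∀ k, s k = a * r ^ k :=
  stmt_10_general a r n hn s hinit hs
end

section
/- Let $s_0, s_1, s_2, s_4$ be reals such that $\begin{pmatrix} s_0 & s_1 \\ s_1 & s_2 \end{pmatrix} > 0$ and $\begin{pmatrix} s_0 & s_2 \\ s_2 & s_4 \end{pmatrix} > 0$. Then there exists $s_3 \in \mathbb{R}$ such that the Hankel matrix $\begin{pmatrix} s_0 & s_1 & s_2 \\ s_1 & s_2 & s_3 \\ s_2 & s_3 & s_4 \end{pmatrix}$ is positive definite. Moreover, $s_3$ works if and only if $\frac{s_1 s_2 - \sqrt{P_1 P_2}}{s_0} < s_3 < \frac{s_1 s_2 + \sqrt{P_1 P_2}}{s_0}$, where $P_1 = s_0 s_2 - s_1^2$ and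 $P_2 = s_0 s_4 - s_2^2$. -/
/-!
Completing squares (Lagrange's reduction) gives, with `P₁ = s₀ s₂ - s₁²`,
`s₀ P₁ · xᵀ H x = P₁ (s₀ x₀ + s₁ x₁ + s₂ x₂)² + (P₁ x₁ + (s₀ s₃ - s₁ s₂) x₂)² + (s₀ det H) x₂²`
and `s₀ det H = P₁ P₂ - (s₀ s₃ - s₁ s₂)²`. Hence, once `s₀, P₁ > 0`, the Hankel matrix is positive
definite exactly when `(s₀ s₃ - s₁ s₂)² < P₁ P₂`, an open interval of values of `s₃` around
`s₁ s₂ / s₀`, which is nonempty because `P₂ > 0`.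
-/

open Matrix

lemma pos_and_det_pos_of_posDef_fin_two {a b d : ℝ} (h : (!![a, b; b, d]).PosDef) :
    0 < a ∧ 0 < a * d - b ^ 2 := by
  refine ⟨by simpa using h.diag_pos (i := 0), ?_⟩
  simpa [det_fin_two_of, sq, mul_comm] using h.det_pos

lemma mul_det_symm_fin_three (a b c d e f : ℝ) :
    a * (!![a, b, c; b, d, e; c, e, f]).det =
      (a * d - b ^ 2) * (a * f - c ^ 2) - (a * e - b * c) ^ 2 := by
  simp only [det_fin_three, of_apply, cons_val', cons_val_zero, cons_val_fin_one, cons_val_one,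
    cons_val]
  ring

lemma dotProduct_mulVec_symm_fin_three (a b c d e f : ℝ) (v : Fin 3 → ℝ) :
    star v ⬝ᵥ !![a, b, c; b, d, e; c, e, f] *ᵥ v =
      a * v 0 ^ 2 + d * v 1 ^ 2 + f * v 2 ^ 2 + 2 * b * v 0 * v 1 + 2 * c * v 0 * v 2
        + 2 * e * v 1 * v 2 := by
  simp only [dotProduct, Pi.star_apply, star_trivial, mulVec, of_apply, cons_val',
    cons_val_fin_one, Fin.sum_univ_three, cons_val_zero, cons_val_one, cons_val]
  ring

lemma mul_quadForm_eq_sum_sq (a b c d e f x y z : ℝ) :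
    a * (a * d - b ^ 2) *
        (a * x ^ 2 + d * y ^ 2 + f * z ^ 2 + 2 * b * x * y + 2 * c * x * z + 2 * e * y * z) =
      (a * d - b ^ 2) * (a * x + b * y + c * z) ^ 2
        + ((a * d - b ^ 2) * y + (a * e - b * c) * z) ^ 2
        + ((a * d - b ^ 2) * (a * f - c ^ 2) - (a * e - b * c) ^ 2) * z ^ 2 := by
  ring

lemma weighted_sum_sq_pos {P R u w z : ℝ} (hP : 0 < P) (hR : 0 < R)
    (h : u ≠ 0 ∨ w ≠ 0 ∨ z ≠ 0) : 0 < P * u ^ 2 + w ^ 2 + R * z ^ 2 := by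
  rcases h with h | h | h <;> positivity

lemma quadForm_symm_fin_three_pos {a b c d e f x y z : ℝ} (ha : 0 < a) (hP : 0 < a * d - b ^ 2)
    (hR : (a * e - b * c) ^ 2 < (a * d - b ^ 2) * (a * f - c ^ 2))
    (hxyz : x ≠ 0 ∨ y ≠ 0 ∨ z ≠ 0) :
    0 < a * x ^ 2 + d * y ^ 2 + f * z ^ 2 + 2 * b * x * y + 2 * c * x * z + 2 * e * y * z := by
  refine pos_of_mul_pos_right ?_ (mul_pos ha hP).le
  rw [mul_quadForm_eq_sum_sq]
  refine weighted_sum_sq_pos hP (sub_pos.mpr hR) ?_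
  by_contra! h0
  obtain ⟨hu, hw, hz⟩ := h0
  have hy : y = 0 := by simpa [hz, hP.ne'] using hw
  have hx : x = 0 := by simpa [hy, hz, ha.ne'] using hu
  simp [hx, hy, hz] at hxyz

theorem posDef_symm_fin_three_iff {a b c d e f : ℝ} (ha : 0 < a) (hP : 0 < a * d - b ^ 2) :
    (!![a, b, c; b, d, e; c, e, f]).PosDef ↔
      (a * e - b * c) ^ 2 < (a * d - b ^ 2) * (a * f - c ^ 2) := by
  constructor
  · intro h
    have := mul_pos ha h.det_pos
    rw [mul_det_symm_fin_three] at this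
    linarith
  · intro hR
    refine PosDef.of_dotProduct_mulVec_pos ?_ fun v hv => ?_
    · ext i j; fin_cases i <;> fin_cases j <;> rfl
    · rw [dotProduct_mulVec_symm_fin_three]
      refine quadForm_symm_fin_three_pos ha hP hR ?_
      by_contra! h0
      exact hv (by ext i; fin_cases i <;> simp [h0.1, h0.2.1, h0.2.2])

lemma sq_sub_lt_iff {a m r t : ℝ} (ha : 0 < a) (hr : 0 ≤ r) :
    (a * t - m) ^ 2 < r ↔ (m - √r) / a < t ∧ t < (m + √r) / a := by
  rw [← Real.sq_sqrt hr, sq_lt_sq, abs_of_nonneg (Real.sqrt_nonneg r), abs_lt, div_lt_iff₀ ha,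
    lt_div_iff₀ ha, Real.sq_sqrt hr]
  constructor <;> rintro ⟨h₁, h₂⟩ <;> constructor <;> linarith

theorem stmt_12 (s₀ s₁ s₂ s₄ : ℝ)
    (h₁ : (!![s₀, s₁; s₁, s₂]).PosDef)
    (h₂ : (!![s₀, s₂; s₂, s₄]).PosDef) :
    (∃ s₃ : ℝ, (!![s₀, s₁, s₂; s₁, s₂, s₃; s₂, s₃, s₄]).PosDef) ∧
    (∀ s₃ : ℝ, (!![s₀, s₁, s₂; s₁, s₂, s₃; s₂, s₃, s₄]).PosDef ↔
      ((s₁ * s₂ - Real.sqrt ((s₀ * s₂ - s₁ ^ 2) * (s₀ * s₄ - s₂ ^ 2))) / s₀ < s₃ ∧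
        s₃ < (s₁ * s₂ + Real.sqrt ((s₀ * s₂ - s₁ ^ 2) * (s₀ * s₄ - s₂ ^ 2))) / s₀)) := by
  obtain ⟨hs₀, hP₁⟩ := pos_and_det_pos_of_posDef_fin_two h₁
  obtain ⟨-, hP₂⟩ := pos_and_det_pos_of_posDef_fin_two h₂
  have hP : 0 < (s₀ * s₂ - s₁ ^ 2) * (s₀ * s₄ - s₂ ^ 2) := mul_pos hP₁ hP₂
  have posDef_iff (s₃ : ℝ) := (posDef_symm_fin_three_iff (e := s₃) (f := s₄) hs₀ hP₁).trans
    (sq_sub_lt_iff hs₀ hP.le)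
  refine ⟨⟨s₁ * s₂ / s₀, (posDef_symm_fin_three_iff hs₀ hP₁).mpr ?_⟩, posDef_iff⟩
  rwa [mul_div_cancel₀ _ hs₀.ne', sub_self, sq, zero_mul]
end

section
/- There exist reals $s_0 = 1$, $s_1 = 1/2$, $s_4 = 1/16$ such that for all reals $s_2, s_3$, the Hankel matrix $\begin{pmatrix} s_0 & s_1 & s_2 \\ s_1 & s_2 & s_3 \\ s_2 & s_3 & s_4 \end{pmatrix}$ is not positive definite. Consequently the pattern $\{0,1,4\}$ for $3\times 3$ Hankel matrices is not positive definite completable. -/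
open Matrix

theorem Matrix.PosDef.mul_self_lt_mul_diag {n : Type*} [Fintype n] {A : Matrix n n ℝ}
    (hA : A.PosDef) {i j : n} (hij : i ≠ j) : A i j * A i j < A i i * A j j := by
  have hsub : (A.submatrix ![i, j] ![i, j]).PosDef :=
    hA.submatrix fun a b ↦ by fin_cases a <;> fin_cases b <;> simp [hij, hij.symm]
  have hsymm : A j i = A i j := hA.isHermitian.apply i j
  have hdet := hsub.det_pos
  rw [det_fin_two] at hdet
  simp only [submatrix_apply, cons_val_zero, cons_val_one, hsymm] at hdet
  linarith

theorem stmt_13 :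
    ∃ s₀ s₁ s₄ : ℝ, s₀ = 1 ∧ s₁ = 1 / 2 ∧ s₄ = 1 / 16 ∧
      ∀ s₂ s₃ : ℝ, ¬ (!![s₀, s₁, s₂; s₁, s₂, s₃; s₂, s₃, s₄]).PosDef := by
  refine ⟨1, 1 / 2, 1 / 16, rfl, rfl, rfl, fun s₂ s₃ hpos ↦ ?_⟩
  have h₀₁ := hpos.mul_self_lt_mul_diag (i := 0) (j := 1) (by decide)
  have h₀₂ := hpos.mul_self_lt_mul_diag (i := 0) (j := 2) (by decide)
  simp only [of_apply, cons_val', cons_val_zero, cons_val_one, cons_val, cons_val_fin_one,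
    one_mul] at h₀₁ h₀₂
  -- `1/4 < s₂` from the first minor, `s₂² < 1/16` from the second.
  nlinarith
end

section
/- Let $P \subseteq \{0, \ldots, 2n\}$ be a pattern, and suppose that for every partial Hankel data on $P$ whose fully specified principal submatrices are positive semidefinite there is a positive semidefinite Hankel completion. Then for every partial Hankel data on $P$ whose fully specified principal submatrices are positive definite, there is a positive definite Hankel completion. -/
/-- An index set `α` of the `(n+1) × (n+1)` Hankel matrix is fully specified by the
pattern `P` if all the entries `s (i + j)` it involves lie in `P`. -/
def FullySpecified (n : ℕ) (P : Finset ℕ) (α : Finset (Fin (n + 1))) : Prop :=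
  ∀ i ∈ α, ∀ j ∈ α, (i : ℕ) + (j : ℕ) ∈ P


open Matrix

noncomputable section

/-- the positive definite Hankel sequence: moments of points 0,…,n. -/
def hilbSeq (n : ℕ) (k : ℕ) : ℝ := ∑ m : Fin (n + 1), (m : ℝ) ^ k

lemma hankel_hilb (n : ℕ) :
    hankelMatrix (hilbSeq n) n =
      (Matrix.vandermonde (fun i : Fin (n + 1) => (i : ℝ)))ᵀ *
        Matrix.vandermonde (fun i : Fin (n + 1) => (i : ℝ)) := by
  ext i j
  rw [Matrix.vandermonde_transpose_mul_vandermonde]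
  rfl

lemma hilb_posDef (n : ℕ) : (hankelMatrix (hilbSeq n) n).PosDef := by
  rw [hankel_hilb]
  set v : Fin (n + 1) → ℝ := fun i => (i : ℝ) with hv
  have hinj : Function.Injective v := fun a b h => by
    apply Fin.ext
    exact_mod_cast Nat.cast_injective h
  have hdet : (Matrix.vandermonde v).det ≠ 0 :=
    Matrix.det_vandermonde_ne_zero_iff.mpr hinj
  refine Matrix.posDef_iff_dotProduct_mulVec.mpr ⟨?_, ?_⟩
  · have h := Matrix.isHermitian_conjTranspose_mul_self (Matrix.vandermonde v)
    simpa using h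
  · intro x hx
    have hVx : Matrix.vandermonde v *ᵥ x ≠ 0 := by
      intro h
      exact hx (Matrix.eq_zero_of_mulVec_eq_zero hdet h)
    have hstar : star x = x := by simp
    rw [hstar, ← Matrix.mulVec_mulVec, dotProduct_mulVec, Matrix.vecMul_transpose]
    refine lt_of_le_of_ne (Finset.sum_nonneg fun i _ => mul_self_nonneg _) ?_
    exact fun h => hVx (dotProduct_self_eq_zero.mp h.symm)

lemma exists_eps {ι : Type*} [Fintype ι] (M N : Matrix ι ι ℝ) (hM : M.PosDef)
    (hMh : M.IsHermitian) (hNh : N.IsHermitian) :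
    ∃ ε : ℝ, 0 < ε ∧ ∀ δ : ℝ, 0 < δ → δ ≤ ε → (M - δ • N).PosSemidef := by
  have hherm : ∀ δ : ℝ, (M - δ • N).IsHermitian := by
    intro δ
    refine hMh.sub ?_
    show (δ • N)ᴴ = δ • N
    rw [Matrix.conjTranspose_smul, star_trivial, hNh]
  -- quadratic forms
  set f : (ι → ℝ) → ℝ := fun x => dotProduct x (M *ᵥ x) with hf
  set g : (ι → ℝ) → ℝ := fun x => dotProduct x (N *ᵥ x) with hg
  have hfc : Continuous f := continuous_id.dotProduct
    (continuous_const.matrix_mulVec continuous_id)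
  have hgc : Continuous g := continuous_id.dotProduct
    (continuous_const.matrix_mulVec continuous_id)
  rcases isEmpty_or_nonempty ι with hι | hι
  · refine ⟨1, one_pos, fun δ _ _ => Matrix.posSemidef_iff_dotProduct_mulVec.mpr ⟨hherm δ, fun x => ?_⟩⟩
    have : x = 0 := funext fun i => (IsEmpty.false i).elim
    simp [this]
  · have hS : (Metric.sphere (0 : ι → ℝ) 1).Nonempty :=
      NormedSpace.sphere_nonempty.mpr zero_le_one
    obtain ⟨x₀, hx₀S, hx₀min⟩ :=
      (isCompact_sphere (0 : ι → ℝ) 1).exists_isMinOn hS hfc.continuousOn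
    obtain ⟨y₀, hy₀S, hy₀max⟩ :=
      (isCompact_sphere (0 : ι → ℝ) 1).exists_isMaxOn hS hgc.continuousOn
    have hx₀ne : x₀ ≠ 0 := by
      intro h
      have := mem_sphere_zero_iff_norm.mp hx₀S
      rw [h] at this; simp at this
    have hc : 0 < f x₀ := by
      have := hM.dotProduct_mulVec_pos hx₀ne
      simpa [hf, star_trivial] using this
    set b : ℝ := max (g y₀) 1 with hb
    have hb0 : 0 < b := lt_max_of_lt_right one_pos
    refine ⟨f x₀ / b, div_pos hc hb0, fun δ hδ hδle => Matrix.posSemidef_iff_dotProduct_mulVec.mpr ⟨hherm δ, fun x => ?_⟩⟩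
    -- reduce to the key inequality δ * g x ≤ f x
    have key : δ * g x ≤ f x := by
      rcases eq_or_ne x 0 with rfl | hx
      · simp [hf, hg]
      · have hnx : 0 < ‖x‖ := norm_pos_iff.mpr hx
        set u : ι → ℝ := ‖x‖⁻¹ • x with hu
        have huS : u ∈ Metric.sphere (0 : ι → ℝ) 1 := by
          rw [mem_sphere_zero_iff_norm, hu, norm_smul, norm_inv, norm_norm]
          field_simp
        have hfs : f x = ‖x‖ ^ 2 * f u := by
          simp only [hf, hu, Matrix.mulVec_smul, smul_dotProduct,
            dotProduct_smul, smul_eq_mul]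
          field_simp
        have hgs : g x = ‖x‖ ^ 2 * g u := by
          simp only [hg, hu, Matrix.mulVec_smul, smul_dotProduct,
            dotProduct_smul, smul_eq_mul]
          field_simp
        have h1 : δ * g u ≤ f u := by
          have hgb : g u ≤ b := le_trans (hy₀max huS) (le_max_left _ _)
          have h2 : δ * g u ≤ δ * b := by
            exact mul_le_mul_of_nonneg_left hgb hδ.le
          have h3 : δ * b ≤ (f x₀ / b) * b := by
            exact mul_le_mul_of_nonneg_right hδle hb0.le
          have h4 : (f x₀ / b) * b = f x₀ := div_mul_cancel₀ _ hb0.ne'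
          calc δ * g u ≤ δ * b := h2
            _ ≤ (f x₀ / b) * b := h3
            _ = f x₀ := h4
            _ ≤ f u := hx₀min huS
        rw [hfs, hgs]
        calc δ * (‖x‖ ^ 2 * g u) = ‖x‖ ^ 2 * (δ * g u) := by ring
          _ ≤ ‖x‖ ^ 2 * f u := by
              exact mul_le_mul_of_nonneg_left h1 (sq_nonneg _)
    have expand : dotProduct (star x) ((M - δ • N) *ᵥ x) = f x - δ * g x := by
      simp [hf, hg, Matrix.sub_mulVec, dotProduct_sub, Matrix.smul_mulVec,
        dotProduct_smul, star_trivial, smul_eq_mul]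
    rw [expand]
    linarith

lemma hankelSub_isHermitian {ι : Type*} (s : ℕ → ℝ) (n : ℕ) (f : ι → Fin (n + 1)) :
    ((hankelMatrix s n).submatrix f f).IsHermitian := by
  show _ᴴ = _
  ext i j
  simp [hankelMatrix, Matrix.conjTranspose_apply, Matrix.submatrix_apply, add_comm]

lemma posDef_smul' {ι : Type*} [Fintype ι] {M : Matrix ι ι ℝ} (hM : M.PosDef) {c : ℝ}
    (hc : 0 < c) : (c • M).PosDef := by
  refine Matrix.posDef_iff_dotProduct_mulVec.mpr ⟨?_, ?_⟩
  · show _ᴴ = _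
    rw [Matrix.conjTranspose_smul, star_trivial, hM.1]
  · intro x hx
    have h := hM.dotProduct_mulVec_pos hx
    simpa [Matrix.smul_mulVec, dotProduct_smul, smul_eq_mul] using mul_pos hc h

theorem stmt_18 (n : ℕ) (P : Finset ℕ) (hP : P ⊆ Finset.range (2 * n + 1))
    (hpsd : ∀ s : ℕ → ℝ,
      (∀ α : Finset (Fin (n + 1)), FullySpecified n P α →
        ((hankelMatrix s n).submatrix (fun i : α => (i : Fin (n + 1)))
          (fun i : α => (i : Fin (n + 1)))).PosSemidef) →
      ∃ t : ℕ → ℝ, (∀ k ∈ P, t k = s k) ∧ (hankelMatrix t n).PosSemidef) :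
    ∀ s : ℕ → ℝ,
      (∀ α : Finset (Fin (n + 1)), FullySpecified n P α →
        ((hankelMatrix s n).submatrix (fun i : α => (i : Fin (n + 1)))
          (fun i : α => (i : Fin (n + 1)))).PosDef) →
      ∃ t : ℕ → ℝ, (∀ k ∈ P, t k = s k) ∧ (hankelMatrix t n).PosDef := by
  intro s hpd
  classical
  have key : ∀ α : Finset (Fin (n + 1)), ∃ ε : ℝ, 0 < ε ∧
      (FullySpecified n P α → ∀ δ : ℝ, 0 < δ → δ ≤ ε →
        ((hankelMatrix s n).submatrix (fun i : α => (i : Fin (n + 1)))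
            (fun i : α => (i : Fin (n + 1))) -
          δ • (hankelMatrix (hilbSeq n) n).submatrix (fun i : α => (i : Fin (n + 1)))
            (fun i : α => (i : Fin (n + 1)))).PosSemidef) := by
    intro α
    by_cases hα : FullySpecified n P α
    · obtain ⟨ε, hε, hεP⟩ := exists_eps _ _ (hpd α hα)
        (hankelSub_isHermitian s n _) (hankelSub_isHermitian (hilbSeq n) n _)
      exact ⟨ε, hε, fun _ => hεP⟩
    · exact ⟨1, one_pos, fun h => absurd h hα⟩
  choose e he1 he2 using key
  have hne : (Finset.univ : Finset (Finset (Fin (n + 1)))).Nonempty := Finset.univ_nonempty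
  set ε : ℝ := Finset.univ.inf' hne e with hεdef
  have hε : 0 < ε := (Finset.lt_inf'_iff hne).mpr fun α _ => he1 α
  have hεle : ∀ α, ε ≤ e α := fun α => Finset.inf'_le e (Finset.mem_univ α)
  set s' : ℕ → ℝ := fun k => s k - ε * hilbSeq n k with hs'
  obtain ⟨t, htP, hts⟩ := hpsd s' (by
    intro α hα
    have heq : (hankelMatrix s' n).submatrix (fun i : α => (i : Fin (n + 1)))
        (fun i : α => (i : Fin (n + 1))) =
        (hankelMatrix s n).submatrix (fun i : α => (i : Fin (n + 1)))
            (fun i : α => (i : Fin (n + 1))) -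
          ε • (hankelMatrix (hilbSeq n) n).submatrix (fun i : α => (i : Fin (n + 1)))
            (fun i : α => (i : Fin (n + 1))) := by
      ext i j
      simp [hankelMatrix, hs', Matrix.sub_apply, Matrix.smul_apply, smul_eq_mul]
    rw [heq]
    exact he2 α hα ε hε (hεle α))
  refine ⟨fun k => t k + ε * hilbSeq n k, fun k hk => ?_, ?_⟩
  · show t k + ε * hilbSeq n k = s k
    rw [htP k hk]
    simp [hs']
  · have heq2 : hankelMatrix (fun k => t k + ε * hilbSeq n k) n =
        hankelMatrix t n + ε • hankelMatrix (hilbSeq n) n := by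
      ext i j
      simp [hankelMatrix, Matrix.add_apply, Matrix.smul_apply, smul_eq_mul]
    rw [heq2]
    exact Matrix.PosDef.posSemidef_add hts (posDef_smul' (hilb_posDef n) hε)
end
end
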